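/- Let G = ⟨h, p, a | h³, p², a², (hp)², [a,p]⟩ be the universal group of Djoković–Miller type DjM₂¹. Then the subgroups ⟨h, a⟩ and ⟨h, ap⟩ are each normal of index 2 in G and each is isomorphic to the free product C₃ * C₂ = ⟨h, a | h³, a²⟩. -/

import Mathlib

open scoped commutatorElement

/-- The relators of the Djoković–Miller group DjM₂¹ = ⟨h,p,a ∣ h³, p², a², (hp)², [a,p]⟩,
with generators h = 0, p = 1, a = 2. -/
def DjM21rels : Set (FreeGroup (Fin 3)) :=
  {(FreeGroup.of 0) ^ 3, (FreeGroup.of 1) ^ 2, (FreeGroup.of 2) ^ 2,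
   (FreeGroup.of 0 * FreeGroup.of 1) ^ 2, ⁅(FreeGroup.of 2 : FreeGroup (Fin 3)), FreeGroup.of 1⁆}

/-- The relators of C₃ * C₂ = ⟨h, a ∣ h³, a²⟩, with generators h = 0, a = 1. -/
def C3C2rels : Set (FreeGroup (Fin 2)) :=
  {(FreeGroup.of 0) ^ 3, (FreeGroup.of 1) ^ 2}

namespace DjM21aux

open PresentedGroup SemidirectProduct

abbrev C2 := Multiplicative (ZMod 2)
abbrev K := PresentedGroup C3C2rels
abbrev G0 := PresentedGroup DjM21rels

lemma mk_rel {α : Type*} {rels : Set (FreeGroup α)} {r : FreeGroup α} (h : r ∈ rels) :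
    PresentedGroup.mk rels r = 1 :=
  (QuotientGroup.eq_one_iff _).mpr (Subgroup.subset_normalClosure h)

def hG : G0 := PresentedGroup.of 0
def pG : G0 := PresentedGroup.of 1
def aG : G0 := PresentedGroup.of 2

lemma hG_def : (PresentedGroup.of 0 : G0) = hG := rfl
lemma pG_def : (PresentedGroup.of 1 : G0) = pG := rfl
lemma aG_def : (PresentedGroup.of 2 : G0) = aG := rfl

lemma h3 : hG ^ 3 = 1 := by
  have := mk_rel (rels := DjM21rels) (r := (FreeGroup.of 0) ^ 3) (by simp [DjM21rels])
  rw [map_pow] at this; exact this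

lemma p2 : pG ^ 2 = 1 := by
  have := mk_rel (rels := DjM21rels) (r := (FreeGroup.of 1) ^ 2) (by simp [DjM21rels])
  rw [map_pow] at this; exact this

lemma a2 : aG ^ 2 = 1 := by
  have := mk_rel (rels := DjM21rels) (r := (FreeGroup.of 2) ^ 2) (by simp [DjM21rels])
  rw [map_pow] at this; exact this

lemma hp2 : (hG * pG) ^ 2 = 1 := by
  have := mk_rel (rels := DjM21rels) (r := (FreeGroup.of 0 * FreeGroup.of 1) ^ 2)
    (by simp [DjM21rels])
  rw [map_pow, map_mul] at this; exact this

lemma ap_comm : aG * pG = pG * aG := by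
  have := mk_rel (rels := DjM21rels)
    (r := ⁅(FreeGroup.of 2 : FreeGroup (Fin 3)), FreeGroup.of 1⁆) (by simp [DjM21rels])
  rw [map_commutatorElement] at this
  exact commutatorElement_eq_one_iff_mul_comm.mp this

lemma p_inv : pG⁻¹ = pG := by
  rw [inv_eq_iff_mul_eq_one, ← sq]; exact p2

lemma p_conj_h : pG * hG * pG⁻¹ = hG⁻¹ := by
  rw [p_inv, eq_inv_iff_mul_eq_one]
  have h1 : hG * pG * (hG * pG) = 1 := by rw [← sq]; exact hp2
  calc pG * hG * pG * hG = pG * (hG * pG * (hG * pG)) * pG⁻¹ := by group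
    _ = 1 := by rw [h1]; group

lemma p_conj_a : pG * aG * pG⁻¹ = aG := by
  rw [p_inv, ← ap_comm, mul_assoc, ← sq, p2, mul_one]

def kh : K := PresentedGroup.of 0
def ka : K := PresentedGroup.of 1

lemma kh_def : (PresentedGroup.of 0 : K) = kh := rfl
lemma ka_def : (PresentedGroup.of 1 : K) = ka := rfl

lemma kh3 : kh ^ 3 = 1 := by
  have := mk_rel (rels := C3C2rels) (r := (FreeGroup.of 0) ^ 3) (by simp [C3C2rels])
  rw [map_pow] at this; exact this

lemma ka2 : ka ^ 2 = 1 := by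
  have := mk_rel (rels := C3C2rels) (r := (FreeGroup.of 1) ^ 2) (by simp [C3C2rels])
  rw [map_pow] at this; exact this

/-- the automorphism of K sending h to h⁻¹ and a to a, as a hom -/
def σhom : K →* K :=
  PresentedGroup.toGroup (f := ![kh⁻¹, ka]) (by
    intro r hr
    simp only [C3C2rels, Set.mem_insert_iff, Set.mem_singleton_iff] at hr
    rcases hr with rfl | rfl
    · simp only [map_pow, FreeGroup.lift_apply_of, Matrix.cons_val_zero, inv_pow, kh3, inv_one]
    · simp only [map_pow, FreeGroup.lift_apply_of, Matrix.cons_val_one, Matrix.head_cons, Matrix.cons_val_zero, ka2])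

@[simp] lemma σhom_kh : σhom kh = kh⁻¹ := by
  exact PresentedGroup.toGroup.of (f := ![kh⁻¹, ka]) (x := 0) _

@[simp] lemma σhom_ka : σhom ka = ka := by
  exact PresentedGroup.toGroup.of (f := ![kh⁻¹, ka]) (x := 1) _

lemma σhom_invol : σhom.comp σhom = MonoidHom.id K := by
  refine PresentedGroup.ext fun x => ?_
  fin_cases x <;>
    simp [kh_def, ka_def, MonoidHom.comp_apply]

def σ : MulAut K :=
  MonoidHom.toMulEquiv σhom σhom σhom_invol σhom_invol

@[simp] lemma σ_kh : σ kh = kh⁻¹ := σhom_kh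
@[simp] lemma σ_ka : σ ka = ka := σhom_ka

lemma σ_sq : σ ^ 2 = 1 := by
  ext x
  have := DFunLike.congr_fun σhom_invol x
  simpa [sq, σ] using this

/-- hom from C₂ = Multiplicative (ZMod 2) determined by an element of square one -/
def powC2 {G : Type*} [Group G] (g : G) (hg : g ^ 2 = 1) : C2 →* G where
  toFun x := g ^ (Multiplicative.toAdd x).val
  map_one' := by
    show g ^ (0 : ZMod 2).val = 1
    simp [ZMod.val_zero]
  map_mul' x y := by
    have key : ∀ n : ℕ, g ^ (n % 2) = g ^ n := by
      intro n
      conv_rhs => rw [← Nat.div_add_mod n 2]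
      rw [pow_add, pow_mul, hg, one_pow, one_mul]
    show g ^ ((Multiplicative.toAdd x + Multiplicative.toAdd y).val) = _
    rw [ZMod.val_add, key, pow_add]

@[simp] lemma powC2_apply {G : Type*} [Group G] (g : G) (hg : g ^ 2 = 1) (x : C2) :
    powC2 g hg x = g ^ (Multiplicative.toAdd x).val := rfl

def u : C2 := Multiplicative.ofAdd 1

lemma C2_cases (x : C2) : x = 1 ∨ x = u := by
  have h2 : ∀ z : ZMod 2, z = 0 ∨ z = 1 := by decide
  rcases h2 (Multiplicative.toAdd x) with h | h
  · left; exact h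
  · right; exact h

def φact : C2 →* MulAut K := powC2 σ σ_sq

@[simp] lemma φact_u : φact u = σ := by
  show σ ^ (Multiplicative.toAdd u).val = σ
  have : (Multiplicative.toAdd u).val = 1 := rfl
  rw [this, pow_one]

abbrev S := SemidirectProduct K C2 φact

/-- the hom from G0 to the semidirect product -/
def eh : G0 →* S :=
  PresentedGroup.toGroup (f := ![inl kh, inr u, inl ka]) (by
    intro r hr
    simp only [DjM21rels, Set.mem_insert_iff, Set.mem_singleton_iff] at hr
    rcases hr with rfl | rfl | rfl | rfl | rfl
    · rw [map_pow, FreeGroup.lift_apply_of]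
      show (inl kh : S) ^ 3 = 1
      rw [← map_pow, kh3, map_one]
    · rw [map_pow, FreeGroup.lift_apply_of]
      show (inr u : S) ^ 2 = 1
      rw [← map_pow]
      have : u ^ 2 = 1 := by decide
      rw [this, map_one]
    · rw [map_pow, FreeGroup.lift_apply_of]
      show (inl ka : S) ^ 2 = 1
      rw [← map_pow, ka2, map_one]
    · rw [map_pow, map_mul, FreeGroup.lift_apply_of, FreeGroup.lift_apply_of]
      show ((inl kh : S) * inr u) ^ 2 = 1
      rw [sq]
      ext
      · simp [φact_u]
      · simp only [SemidirectProduct.mul_right, SemidirectProduct.right_inl,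
          SemidirectProduct.right_inr, SemidirectProduct.one_right, one_mul]
        decide
    · rw [map_commutatorElement, FreeGroup.lift_apply_of, FreeGroup.lift_apply_of]
      show ⁅(inl ka : S), inr u⁆ = 1
      rw [commutatorElement_eq_one_iff_mul_comm]
      ext
      · show ka * φact u 1 = 1 * φact u ka
        simp
      · show 1 * u = u * 1
        simp)

@[simp] lemma eh_h : eh hG = inl kh := by
  exact PresentedGroup.toGroup.of (f := ![inl kh, inr u, inl ka]) (x := 0) _
@[simp] lemma eh_p : eh pG = inr u := by
  exact PresentedGroup.toGroup.of (f := ![inl kh, inr u, inl ka]) (x := 1) _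
@[simp] lemma eh_a : eh aG = inl ka := by
  exact PresentedGroup.toGroup.of (f := ![inl kh, inr u, inl ka]) (x := 2) _

/-- the hom K → G0, h ↦ h, a ↦ a -/
def φhom : K →* G0 :=
  PresentedGroup.toGroup (f := ![hG, aG]) (by
    intro r hr
    simp only [C3C2rels, Set.mem_insert_iff, Set.mem_singleton_iff] at hr
    rcases hr with rfl | rfl
    · simp only [map_pow, FreeGroup.lift_apply_of, Matrix.cons_val_zero, h3]
    · simp only [map_pow, FreeGroup.lift_apply_of, Matrix.cons_val_one, Matrix.head_cons, Matrix.cons_val_zero, a2])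

@[simp] lemma φhom_kh : φhom kh = hG := by
  exact PresentedGroup.toGroup.of (f := ![hG, aG]) (x := 0) _
@[simp] lemma φhom_ka : φhom ka = aG := by
  exact PresentedGroup.toGroup.of (f := ![hG, aG]) (x := 1) _

def pC2 : C2 →* G0 := powC2 pG p2

@[simp] lemma pC2_u : pC2 u = pG := by
  show pG ^ (Multiplicative.toAdd u).val = pG
  have : (Multiplicative.toAdd u).val = 1 := rfl
  rw [this, pow_one]

@[simp] lemma pC2_one : pC2 1 = 1 := map_one _

/-- the hom from the semidirect product back to G0 -/
def eh' : S →* G0 :=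
  SemidirectProduct.lift φhom pC2 (by
    intro g
    rcases C2_cases g with rfl | rfl
    · refine PresentedGroup.ext fun x => ?_
      fin_cases x <;> simp [kh_def, ka_def]
    · refine PresentedGroup.ext fun x => ?_
      fin_cases x
      · show φhom (φact u kh) = MulAut.conj (pC2 u) (φhom kh)
        rw [φact_u, σ_kh, map_inv, φhom_kh, pC2_u, MulAut.conj_apply, p_conj_h]
      · show φhom (φact u ka) = MulAut.conj (pC2 u) (φhom ka)
        rw [φact_u, σ_ka, φhom_ka, pC2_u, MulAut.conj_apply, p_conj_a])

lemma eh'_inl (k : K) : eh' (inl k) = φhom k := by simp [eh']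
lemma eh'_inr (g : C2) : eh' (inr g) = pC2 g := by simp [eh']

lemma eh'_eh : eh'.comp eh = MonoidHom.id G0 := by
  refine PresentedGroup.ext fun x => ?_
  fin_cases x <;>
    simp [hG_def, pG_def, aG_def, MonoidHom.comp_apply, eh'_inl, eh'_inr]

lemma eh_eh' : eh.comp eh' = MonoidHom.id S := by
  apply SemidirectProduct.hom_ext
  · refine PresentedGroup.ext fun x => ?_
    fin_cases x <;>
      simp [kh_def, ka_def, MonoidHom.comp_apply, eh'_inl]
  · refine MonoidHom.ext fun g => ?_
    rcases C2_cases g with rfl | rfl <;>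
      simp [MonoidHom.comp_apply, eh'_inr]

def eEquiv : G0 ≃* S := MonoidHom.toMulEquiv eh eh' eh'_eh eh_eh'

lemma eh_comp_φhom : eh.comp φhom = inl := by
  refine PresentedGroup.ext fun x => ?_
  fin_cases x <;> simp [kh_def, ka_def, MonoidHom.comp_apply]

lemma φhom_injective : Function.Injective φhom := by
  intro x y hxy
  apply SemidirectProduct.inl_injective (φ := φact)
  have hx := DFunLike.congr_fun eh_comp_φhom x
  have hy := DFunLike.congr_fun eh_comp_φhom y
  rw [MonoidHom.comp_apply] at hx hy
  rw [← hx, ← hy, hxy]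

lemma range_of_K : Set.range (PresentedGroup.of : Fin 2 → K) = {kh, ka} := by
  ext x
  simp [Set.range, Fin.exists_fin_two, kh, ka, eq_comm]

lemma φhom_range : φhom.range = Subgroup.closure {hG, aG} := by
  rw [MonoidHom.range_eq_map, ← PresentedGroup.closure_range_of C3C2rels,
    MonoidHom.map_closure, range_of_K]
  congr 1
  rw [Set.image_insert_eq, Set.image_singleton, φhom_kh, φhom_ka]

def f₁ : G0 →* C2 := SemidirectProduct.rightHom.comp eh

lemma f₁_surjective : Function.Surjective f₁ :=
  SemidirectProduct.rightHom_surjective.comp eEquiv.surjective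

lemma index_eq_two (f : G0 →* C2) (hf : Function.Surjective f) : f.ker.index = 2 := by
  rw [Subgroup.index_ker, MonoidHom.range_eq_top.mpr hf, Subgroup.card_top,
    Nat.card_eq_fintype_card]
  rfl

lemma H₁_eq_ker : Subgroup.closure {hG, aG} = f₁.ker := by
  apply le_antisymm
  · rw [Subgroup.closure_le]
    intro x hx
    rcases hx with rfl | rfl <;>
      simp [f₁, SetLike.mem_coe, MonoidHom.mem_ker]
  · intro x hx
    rw [MonoidHom.mem_ker, f₁, MonoidHom.comp_apply] at hx
    have : eh x ∈ (inl : K →* S).range := by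
      rw [SemidirectProduct.range_inl_eq_ker_rightHom]
      exact hx
    obtain ⟨k, hk⟩ := this
    rw [← φhom_range]
    refine ⟨k, ?_⟩
    have := DFunLike.congr_fun eh'_eh x
    rw [MonoidHom.comp_apply, MonoidHom.id_apply] at this
    have h2 : eh' (inl k) = φhom k := by simp [eh']
    rw [← this, ← hk, h2]

/-- the involution τ of G0: h ↦ h, p ↦ p, a ↦ a p -/
def τ : G0 →* G0 :=
  PresentedGroup.toGroup (f := ![hG, pG, aG * pG]) (by
    intro r hr
    simp only [DjM21rels, Set.mem_insert_iff, Set.mem_singleton_iff] at hr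
    rcases hr with rfl | rfl | rfl | rfl | rfl
    · simp only [map_pow, FreeGroup.lift_apply_of, Matrix.cons_val_zero, h3]
    · simp only [map_pow, FreeGroup.lift_apply_of, Matrix.cons_val_one, Matrix.head_cons, Matrix.cons_val_zero, p2]
    · simp only [map_pow, FreeGroup.lift_apply_of]
      show (aG * pG) ^ 2 = 1
      have : aG * pG * (aG * pG) = aG * aG * (pG * pG) := by
        rw [mul_assoc aG pG, ← mul_assoc pG aG, ← ap_comm]; group
      rw [sq, this, ← sq, ← sq, a2, p2, mul_one]
    · simp only [map_pow, map_mul, FreeGroup.lift_apply_of, Matrix.cons_val_zero, Matrix.cons_val_one,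
        Matrix.head_cons, hp2]
    · simp only [map_commutatorElement, map_mul, FreeGroup.lift_apply_of]
      rw [commutatorElement_eq_one_iff_mul_comm]
      show aG * pG * pG = pG * (aG * pG)
      rw [← mul_assoc, ← ap_comm])

@[simp] lemma τ_h : τ hG = hG := by
  exact PresentedGroup.toGroup.of (f := ![hG, pG, aG * pG]) (x := 0) _
@[simp] lemma τ_p : τ pG = pG := by
  exact PresentedGroup.toGroup.of (f := ![hG, pG, aG * pG]) (x := 1) _
@[simp] lemma τ_a : τ aG = aG * pG := by
  exact PresentedGroup.toGroup.of (f := ![hG, pG, aG * pG]) (x := 2) _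

lemma τ_invol : τ.comp τ = MonoidHom.id G0 := by
  refine PresentedGroup.ext fun x => ?_
  fin_cases x
  · show τ (τ hG) = hG
    rw [τ_h, τ_h]
  · show τ (τ pG) = pG
    rw [τ_p, τ_p]
  · show τ (τ aG) = aG
    rw [τ_a, map_mul, τ_a, τ_p, mul_assoc, ← sq, p2, mul_one]

def τEquiv : G0 ≃* G0 := MonoidHom.toMulEquiv τ τ τ_invol τ_invol

def ψhom : K →* G0 := τ.comp φhom

@[simp] lemma ψhom_kh : ψhom kh = hG := by simp [ψhom, MonoidHom.comp_apply]
@[simp] lemma ψhom_ka : ψhom ka = aG * pG := by simp [ψhom, MonoidHom.comp_apply]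

lemma ψhom_injective : Function.Injective ψhom :=
  τEquiv.injective.comp φhom_injective

lemma ψhom_range : ψhom.range = Subgroup.closure {hG, aG * pG} := by
  have : ψhom.range = (φhom.range).map τ := by
    rw [ψhom, MonoidHom.range_comp]
  rw [this, φhom_range, MonoidHom.map_closure]
  congr 1
  rw [Set.image_insert_eq, Set.image_singleton, τ_h, τ_a]

def f₂ : G0 →* C2 := f₁.comp τ

lemma f₂_surjective : Function.Surjective f₂ :=
  f₁_surjective.comp τEquiv.surjective

lemma f₁_h : f₁ hG = 1 := by simp [f₁, MonoidHom.comp_apply]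
lemma f₁_a : f₁ aG = 1 := by simp [f₁, MonoidHom.comp_apply]
lemma f₁_p : f₁ pG = u := by simp [f₁, MonoidHom.comp_apply]

lemma H₂_eq_ker : Subgroup.closure {hG, aG * pG} = f₂.ker := by
  apply le_antisymm
  · rw [Subgroup.closure_le]
    intro x hx
    rcases hx with rfl | rfl
    · simp [SetLike.mem_coe, MonoidHom.mem_ker, f₂, MonoidHom.comp_apply, f₁_h]
    · show aG * pG ∈ f₂.ker
      rw [MonoidHom.mem_ker, f₂, MonoidHom.comp_apply, map_mul, τ_a, τ_p, mul_assoc,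
        ← sq, p2, mul_one, f₁_a]
  · intro x hx
    rw [MonoidHom.mem_ker, f₂, MonoidHom.comp_apply, ← MonoidHom.mem_ker] at hx
    rw [← H₁_eq_ker, ← φhom_range] at hx
    obtain ⟨k, hk⟩ := hx
    rw [← ψhom_range]
    refine ⟨k, ?_⟩
    have hτx : τ (τ x) = x := by
      have := DFunLike.congr_fun τ_invol x
      rwa [MonoidHom.comp_apply, MonoidHom.id_apply] at this
    rw [ψhom, MonoidHom.comp_apply, hk, hτx]

end DjM21aux

/-- In G = ⟨h,p,a ∣ h³, p², a², (hp)², [a,p]⟩ (type DjM₂¹), the subgroups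
⟨h, a⟩ and ⟨h, ap⟩ are each normal of index 2 and each isomorphic to C₃ * C₂ via the
obvious maps on generators. -/
theorem DjM21_contains_two_DjM1_subgroups :
    let G := PresentedGroup DjM21rels
    let h : G := PresentedGroup.of 0
    let p : G := PresentedGroup.of 1
    let a : G := PresentedGroup.of 2
    let H₁ : Subgroup G := Subgroup.closure {h, a}
    let H₂ : Subgroup G := Subgroup.closure {h, a * p}
    H₁.Normal ∧ H₁.index = 2 ∧
    (∃ φ : PresentedGroup C3C2rels →* G, Function.Injective φ ∧
      MonoidHom.range φ = H₁ ∧ φ (PresentedGroup.of 0) = h ∧ φ (PresentedGroup.of 1) = a) ∧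
    H₂.Normal ∧ H₂.index = 2 ∧
    (∃ ψ : PresentedGroup C3C2rels →* G, Function.Injective ψ ∧
      MonoidHom.range ψ = H₂ ∧ ψ (PresentedGroup.of 0) = h ∧
      ψ (PresentedGroup.of 1) = a * p) := by
  intro G h p a H₁ H₂
  open DjM21aux in
  refine ⟨?_, ?_, ⟨φhom, φhom_injective, ?_, φhom_kh, φhom_ka⟩,
    ?_, ?_, ⟨ψhom, ψhom_injective, ?_, ψhom_kh, ψhom_ka⟩⟩
  · show (Subgroup.closure {DjM21aux.hG, DjM21aux.aG}).Normal
    rw [DjM21aux.H₁_eq_ker]; exact DjM21aux.f₁.normal_ker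
  · show (Subgroup.closure {DjM21aux.hG, DjM21aux.aG}).index = 2
    rw [DjM21aux.H₁_eq_ker]
    exact DjM21aux.index_eq_two DjM21aux.f₁ DjM21aux.f₁_surjective
  · show DjM21aux.φhom.range = Subgroup.closure {DjM21aux.hG, DjM21aux.aG}
    exact DjM21aux.φhom_range
  · show (Subgroup.closure {DjM21aux.hG, DjM21aux.aG * DjM21aux.pG}).Normal
    rw [DjM21aux.H₂_eq_ker]; exact DjM21aux.f₂.normal_ker
  · show (Subgroup.closure {DjM21aux.hG, DjM21aux.aG * DjM21aux.pG}).index = 2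
    rw [DjM21aux.H₂_eq_ker]
    exact DjM21aux.index_eq_two DjM21aux.f₂ DjM21aux.f₂_surjective
  · show DjM21aux.ψhom.range = Subgroup.closure {DjM21aux.hG, DjM21aux.aG * DjM21aux.pG}
    exact DjM21aux.ψhom_range
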